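/- Obstruction to spatial gluing of a regular sphere to an apparent horizon with integrable matter flux: assume in addition that H is integrable on [ρ₁,ρ₂) (for instance if θ ≡ ξ ≡ 0, i.e. vacuum data). Then r and ϖ extend continuously to ρ₂ and for all ρ ∈ [ρ₁,ρ₂]: r(ρ) − 2ϖ(ρ) ≥ e^{−∫_{ρ₁}^{ρ₂} H(ρ′)dρ′}·(r₁ − 2M₁) > 0. In particular r(ρ₂) > 2ϖ(ρ₂), so the final sphere cannot be marginally trapped; hence a regular sphere cannot be spatially glued to a Schwarzschild apparent-horizon sphere. -/

import Mathlib

open Filter Topology Set MeasureTheory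

/-- **Obstruction to spatial gluing of a regular sphere to an apparent horizon with
integrable matter flux**: for the spacelike constraint system, if the flux
`H = θ²/(rλ) + ξ²/(r(−ν))` is integrable on `[ρ₁,ρ₂)`, then `r` and `ϖ` extend
continuously to `ρ₂` and `r − 2ϖ ≥ e^{−∫H}·(r₁ − 2M₁) > 0` on all of `[ρ₁,ρ₂]`;
in particular `r(ρ₂) > 2ϖ(ρ₂)`, so the final sphere cannot be marginally trapped. -/
theorem spacelike_gluing_obstruction
    (ρ₁ ρ₂ : ℝ) (hρ : ρ₁ < ρ₂)
    (lam ν θ ξ : ℝ → ℝ)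
    (hlamc : ContinuousOn lam (Set.Icc ρ₁ ρ₂)) (hνc : ContinuousOn ν (Set.Icc ρ₁ ρ₂))
    (hθc : ContinuousOn θ (Set.Icc ρ₁ ρ₂)) (hξc : ContinuousOn ξ (Set.Icc ρ₁ ρ₂))
    (hlam : ∀ ρ ∈ Set.Ico ρ₁ ρ₂, 0 < lam ρ)
    (hν : ∀ ρ ∈ Set.Icc ρ₁ ρ₂, ν ρ < 0)
    (r₁ M₁ : ℝ) (hM₁ : 0 < M₁) (hr₁ : 2 * M₁ < r₁)
    (r ϖ : ℝ → ℝ)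
    (hr0 : r ρ₁ = r₁) (hϖ0 : ϖ ρ₁ = M₁)
    (hr : ∀ ρ ∈ Set.Ico ρ₁ ρ₂, HasDerivAt r (lam ρ - ν ρ) ρ)
    (hϖ : ∀ ρ ∈ Set.Ico ρ₁ ρ₂, HasDerivAt ϖ
      ((r ρ / 2 - ϖ ρ) * (θ ρ ^ 2 / (r ρ * lam ρ) + ξ ρ ^ 2 / (r ρ * (-ν ρ)))) ρ)
    (hint : IntegrableOn
      (fun ρ => θ ρ ^ 2 / (r ρ * lam ρ) + ξ ρ ^ 2 / (r ρ * (-ν ρ))) (Set.Ico ρ₁ ρ₂)) :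
    ∃ Rend Wend : ℝ,
      Filter.Tendsto r (nhdsWithin ρ₂ (Set.Ico ρ₁ ρ₂)) (nhds Rend) ∧
      Filter.Tendsto ϖ (nhdsWithin ρ₂ (Set.Ico ρ₁ ρ₂)) (nhds Wend) ∧
      (∀ ρ ∈ Set.Ico ρ₁ ρ₂,
        Real.exp (-(∫ ρ' in Set.Ico ρ₁ ρ₂,
            (θ ρ' ^ 2 / (r ρ' * lam ρ') + ξ ρ' ^ 2 / (r ρ' * (-ν ρ'))))) * (r₁ - 2 * M₁)
          ≤ r ρ - 2 * ϖ ρ) ∧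
      Real.exp (-(∫ ρ' in Set.Ico ρ₁ ρ₂,
          (θ ρ' ^ 2 / (r ρ' * lam ρ') + ξ ρ' ^ 2 / (r ρ' * (-ν ρ'))))) * (r₁ - 2 * M₁)
        ≤ Rend - 2 * Wend ∧
      0 < Real.exp (-(∫ ρ' in Set.Ico ρ₁ ρ₂,
          (θ ρ' ^ 2 / (r ρ' * lam ρ') + ξ ρ' ^ 2 / (r ρ' * (-ν ρ'))))) * (r₁ - 2 * M₁) ∧
      2 * Wend < Rend := by
  set H : ℝ → ℝ := fun ρ => θ ρ ^ 2 / (r ρ * lam ρ) + ξ ρ ^ 2 / (r ρ * (-ν ρ)) with hHdef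
  set I : ℝ := ∫ ρ' in Set.Ico ρ₁ ρ₂, H ρ' with hIdef
  set c : ℝ := Real.exp (-I) * (r₁ - 2 * M₁) with hcdef
  have hM : 0 < r₁ - 2 * M₁ := by linarith
  have hcpos : 0 < c := mul_pos (Real.exp_pos _) hM
  have hico : Set.Ico ρ₁ ρ₂ ⊆ Set.Icc ρ₁ ρ₂ := Set.Ico_subset_Icc_self
  -- continuity of r, ϖ on Ico
  have hrc : ContinuousOn r (Set.Ico ρ₁ ρ₂) :=
    fun x hx => ((hr x hx).continuousAt).continuousWithinAt
  have hϖc : ContinuousOn ϖ (Set.Ico ρ₁ ρ₂) :=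
    fun x hx => ((hϖ x hx).continuousAt).continuousWithinAt
  -- monotonicity of r
  have rmono : MonotoneOn r (Set.Ico ρ₁ ρ₂) := by
    apply monotoneOn_of_deriv_nonneg (convex_Ico ρ₁ ρ₂) hrc
    · rw [interior_Ico]
      exact fun x hx => ((hr x (Set.Ioo_subset_Ico_self hx)).differentiableAt).differentiableWithinAt
    · rw [interior_Ico]
      intro x hx
      have hx' : x ∈ Set.Ico ρ₁ ρ₂ := Set.Ioo_subset_Ico_self hx
      rw [(hr x hx').deriv]
      have := hlam x hx'
      have := hν x (hico hx')
      linarith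
  have hmem₁ : ρ₁ ∈ Set.Ico ρ₁ ρ₂ := Set.left_mem_Ico.2 hρ
  have hrpos : ∀ ρ ∈ Set.Ico ρ₁ ρ₂, 0 < r ρ := by
    intro ρ hρm
    have := rmono hmem₁ hρm hρm.1
    rw [hr0] at this
    linarith
  -- continuity of H on Ico
  have hHc : ContinuousOn H (Set.Ico ρ₁ ρ₂) := by
    apply ContinuousOn.add
    · exact ((hθc.mono hico).pow 2).div (hrc.mul (hlamc.mono hico))
        (fun x hx => ne_of_gt (mul_pos (hrpos x hx) (hlam x hx)))
    · exact ((hξc.mono hico).pow 2).div (hrc.mul ((hνc.mono hico).neg))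
        (fun x hx => ne_of_gt (mul_pos (hrpos x hx) (by simpa using (hν x (hico hx)))))
  have hH0 : ∀ ρ ∈ Set.Ico ρ₁ ρ₂, 0 ≤ H ρ := by
    intro ρ hρm
    have h1 : 0 < r ρ * lam ρ := mul_pos (hrpos ρ hρm) (hlam ρ hρm)
    have h2 : 0 < r ρ * (-ν ρ) := mul_pos (hrpos ρ hρm) (by simpa using hν ρ (hico hρm))
    exact add_nonneg (div_nonneg (sq_nonneg _) h1.le) (div_nonneg (sq_nonneg _) h2.le)
  -- the primitive of H
  set E : ℝ → ℝ := fun ρ => ∫ t in ρ₁..ρ, H t with hEdef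
  have hIccsub : ∀ b ∈ Set.Ico ρ₁ ρ₂, Set.Icc ρ₁ b ⊆ Set.Ico ρ₁ ρ₂ :=
    fun b hb t ht => ⟨ht.1, lt_of_le_of_lt ht.2 hb.2⟩
  have hHint : ∀ b ∈ Set.Ico ρ₁ ρ₂, IntervalIntegrable H MeasureTheory.volume ρ₁ b := by
    intro b hb
    apply ContinuousOn.intervalIntegrable
    rw [Set.uIcc_of_le hb.1]
    exact hHc.mono (hIccsub b hb)
  have hEder : ∀ x ∈ Set.Ioo ρ₁ ρ₂, HasDerivAt E (H x) x := by
    intro x hx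
    have hxm : x ∈ Set.Ico ρ₁ ρ₂ := Set.Ioo_subset_Ico_self hx
    exact intervalIntegral.integral_hasDerivAt_right (hHint x hxm)
      ⟨Set.Ico ρ₁ ρ₂, Ico_mem_nhds hx.1 hx.2, hHc.aestronglyMeasurable measurableSet_Ico⟩
      (hHc.continuousAt (Ico_mem_nhds hx.1 hx.2))
  have hE0 : E ρ₁ = 0 := intervalIntegral.integral_same
  -- Gronwall: (r - 2ϖ) * exp E is monotone on each Icc ρ₁ b
  have key : ∀ b ∈ Set.Ico ρ₁ ρ₂, r₁ - 2 * M₁ ≤ (r b - 2 * ϖ b) * Real.exp (E b) := by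
    intro b hb
    set g : ℝ → ℝ := fun ρ => (r ρ - 2 * ϖ ρ) * Real.exp (E ρ) with hgdef
    have hgder : ∀ x ∈ Set.Ioo ρ₁ ρ₂, HasDerivAt g (Real.exp (E x) * (lam x - ν x)) x := by
      intro x hx
      have hxm : x ∈ Set.Ico ρ₁ ρ₂ := Set.Ioo_subset_Ico_self hx
      have h1 := (hr x hxm).sub ((hϖ x hxm).const_mul 2)
      have h2 := (hEder x hx).exp
      have := h1.mul h2
      convert this using 1
      · rfl
      · rfl
      · rfl
      · simp only [hHdef, Pi.sub_apply]
        ring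
    have hEc : ContinuousOn E (Set.Icc ρ₁ b) := by
      have := intervalIntegral.continuousOn_primitive_interval
        (μ := MeasureTheory.volume) (f := H) (a := ρ₁) (b := b)
        (by rw [Set.uIcc_of_le hb.1]
            exact ((hHc.mono (hIccsub b hb)).integrableOn_compact isCompact_Icc))
      rwa [Set.uIcc_of_le hb.1] at this
    have hgc : ContinuousOn g (Set.Icc ρ₁ b) :=
      (((hrc.mono (hIccsub b hb)).sub ((continuousOn_const).mul
        (hϖc.mono (hIccsub b hb)))).mul (hEc.rexp))
    have hgmono : MonotoneOn g (Set.Icc ρ₁ b) := by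
      apply monotoneOn_of_deriv_nonneg (convex_Icc ρ₁ b) hgc
      · rw [interior_Icc]
        intro x hx
        have hx' : x ∈ Set.Ioo ρ₁ ρ₂ := ⟨hx.1, lt_of_lt_of_le hx.2 hb.2.le⟩
        exact ((hgder x hx').differentiableAt).differentiableWithinAt
      · rw [interior_Icc]
        intro x hx
        have hx' : x ∈ Set.Ioo ρ₁ ρ₂ := ⟨hx.1, lt_of_lt_of_le hx.2 hb.2.le⟩
        rw [(hgder x hx').deriv]
        have h3 := hlam x (Set.Ioo_subset_Ico_self hx')
        have h4 := hν x (hico (Set.Ioo_subset_Ico_self hx'))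
        have := Real.exp_pos (E x)
        nlinarith
    have := hgmono (Set.left_mem_Icc.2 hb.1) (Set.right_mem_Icc.2 hb.1) hb.1
    simpa [hgdef, hr0, hϖ0, hE0] using this
  -- E b ≤ I
  have hEle : ∀ b ∈ Set.Ico ρ₁ ρ₂, E b ≤ I := by
    intro b hb
    have h1 : E b = ∫ t in Set.Ioc ρ₁ b, H t := intervalIntegral.integral_of_le hb.1
    rw [h1, hIdef]
    apply MeasureTheory.setIntegral_mono_set hint
    · exact (ae_restrict_iff' measurableSet_Ico).2 (Filter.Eventually.of_forall hH0)
    · exact HasSubset.Subset.eventuallyLE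
        (fun t ht => ⟨ht.1.le, lt_of_le_of_lt ht.2 hb.2⟩)
  -- main pointwise bound
  have main : ∀ ρ ∈ Set.Ico ρ₁ ρ₂, c ≤ r ρ - 2 * ϖ ρ := by
    intro b hb
    have h1 : (r₁ - 2 * M₁) * Real.exp (-(E b)) ≤ r b - 2 * ϖ b := by
      calc (r₁ - 2 * M₁) * Real.exp (-(E b))
          ≤ ((r b - 2 * ϖ b) * Real.exp (E b)) * Real.exp (-(E b)) :=
            mul_le_mul_of_nonneg_right (key b hb) (Real.exp_pos _).le
        _ = r b - 2 * ϖ b := by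
            rw [mul_assoc, ← Real.exp_add]; simp
    have h2 : Real.exp (-I) ≤ Real.exp (-(E b)) :=
      Real.exp_le_exp.2 (neg_le_neg (hEle b hb))
    calc c = Real.exp (-I) * (r₁ - 2 * M₁) := rfl
      _ ≤ Real.exp (-(E b)) * (r₁ - 2 * M₁) := mul_le_mul_of_nonneg_right h2 hM.le
      _ = (r₁ - 2 * M₁) * Real.exp (-(E b)) := by ring
      _ ≤ r b - 2 * ϖ b := h1
  -- upper bound for r
  obtain ⟨C, hC⟩ := isCompact_Icc.exists_bound_of_continuousOn (hlamc.sub hνc)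
  have hC0 : 0 ≤ C := le_trans (norm_nonneg _) (hC ρ₁ (Set.left_mem_Icc.2 hρ.le))
  have hrub : ∀ ρ ∈ Set.Ico ρ₁ ρ₂, r ρ ≤ r₁ + C * (ρ₂ - ρ₁) := by
    intro b hb
    have hftc : ∫ t in ρ₁..b, (lam t - ν t) = r b - r ρ₁ := by
      apply intervalIntegral.integral_eq_sub_of_hasDerivAt
      · intro t ht
        rw [Set.uIcc_of_le hb.1] at ht
        exact hr t (hIccsub b hb ht)
      · apply ContinuousOn.intervalIntegrable
        rw [Set.uIcc_of_le hb.1]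
        exact (hlamc.sub hνc).mono ((hIccsub b hb).trans hico)
    have hile : ∫ t in ρ₁..b, (lam t - ν t) ≤ ∫ _t in ρ₁..b, C := by
      apply intervalIntegral.integral_mono_on hb.1
      · apply ContinuousOn.intervalIntegrable
        rw [Set.uIcc_of_le hb.1]
        exact (hlamc.sub hνc).mono ((hIccsub b hb).trans hico)
      · exact intervalIntegrable_const
      · intro x hx
        have := hC x (hico (hIccsub b hb hx))
        rw [Real.norm_eq_abs] at this
        exact le_of_abs_le this
    rw [intervalIntegral.integral_const, smul_eq_mul] at hile
    have hble : (b - ρ₁) * C ≤ (ρ₂ - ρ₁) * C :=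
      mul_le_mul_of_nonneg_right (by linarith [hb.2]) hC0
    rw [hr0] at hftc
    nlinarith
  -- monotonicity of ϖ
  have wmono : MonotoneOn ϖ (Set.Ico ρ₁ ρ₂) := by
    apply monotoneOn_of_deriv_nonneg (convex_Ico ρ₁ ρ₂) hϖc
    · rw [interior_Ico]
      exact fun x hx =>
        ((hϖ x (Set.Ioo_subset_Ico_self hx)).differentiableAt).differentiableWithinAt
    · rw [interior_Ico]
      intro x hx
      have hxm : x ∈ Set.Ico ρ₁ ρ₂ := Set.Ioo_subset_Ico_self hx
      rw [(hϖ x hxm).deriv]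
      have h1 := main x hxm
      have h2 := hH0 x hxm
      have : 0 ≤ r x / 2 - ϖ x := by linarith
      exact mul_nonneg this h2
  -- bounded above
  have hne : (Set.Ioo ρ₁ ρ₂).Nonempty := Set.nonempty_Ioo.2 hρ
  have hsubIoo : Set.Ioo ρ₁ ρ₂ ⊆ Set.Ico ρ₁ ρ₂ := Set.Ioo_subset_Ico_self
  have hrbdd : BddAbove (r '' Set.Ioo ρ₁ ρ₂) := by
    refine ⟨r₁ + C * (ρ₂ - ρ₁), ?_⟩
    rintro _ ⟨x, hx, rfl⟩
    exact hrub x (hsubIoo hx)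
  have hwbdd : BddAbove (ϖ '' Set.Ioo ρ₁ ρ₂) := by
    refine ⟨(r₁ + C * (ρ₂ - ρ₁)) / 2, ?_⟩
    rintro _ ⟨x, hx, rfl⟩
    have h1 := main x (hsubIoo hx)
    have h2 := hrub x (hsubIoo hx)
    linarith
  have hRlim := MonotoneOn.tendsto_nhdsWithin_Ioo_left hne (rmono.mono hsubIoo) hrbdd
  have hWlim := MonotoneOn.tendsto_nhdsWithin_Ioo_left hne (wmono.mono hsubIoo) hwbdd
  refine ⟨sSup (r '' Set.Ioo ρ₁ ρ₂), sSup (ϖ '' Set.Ioo ρ₁ ρ₂), ?_, ?_, ?_, ?_, ?_, ?_⟩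
  · rw [nhdsWithin_Ico_eq_nhdsLT hρ]; exact hRlim
  · rw [nhdsWithin_Ico_eq_nhdsLT hρ]; exact hWlim
  · exact main
  · have hlim : Filter.Tendsto (fun ρ => r ρ - 2 * ϖ ρ) (𝓝[<] ρ₂)
        (𝓝 (sSup (r '' Set.Ioo ρ₁ ρ₂) - 2 * sSup (ϖ '' Set.Ioo ρ₁ ρ₂))) :=
      hRlim.sub (hWlim.const_mul 2)
    refine ge_of_tendsto hlim ?_
    filter_upwards [Ioo_mem_nhdsLT hρ] with x hx
    exact main x (hsubIoo hx)
  · -- c > 0 restated for the goal, plus previous bullet implies strictness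
    have hlim : Filter.Tendsto (fun ρ => r ρ - 2 * ϖ ρ) (𝓝[<] ρ₂)
        (𝓝 (sSup (r '' Set.Ioo ρ₁ ρ₂) - 2 * sSup (ϖ '' Set.Ioo ρ₁ ρ₂))) :=
      hRlim.sub (hWlim.const_mul 2)
    exact hcpos
  · have hlim : Filter.Tendsto (fun ρ => r ρ - 2 * ϖ ρ) (𝓝[<] ρ₂)
        (𝓝 (sSup (r '' Set.Ioo ρ₁ ρ₂) - 2 * sSup (ϖ '' Set.Ioo ρ₁ ρ₂))) :=
      hRlim.sub (hWlim.const_mul 2)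
    have hge : c ≤ sSup (r '' Set.Ioo ρ₁ ρ₂) - 2 * sSup (ϖ '' Set.Ioo ρ₁ ρ₂) := by
      refine ge_of_tendsto hlim ?_
      filter_upwards [Ioo_mem_nhdsLT hρ] with x hx
      exact main x (hsubIoo hx)
    linarith
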